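/- arXiv:2411.14284 — 2 statements merged into one kernel-verified Lean document; each statement's English description precedes it below -/
import Mathlib

section
/- For every guarded string w = α₁p₁α₂...α_n there is an interpretation on the state set S = {1,...,n} (with τ_w(t) = {i : t ∈ α_i} and σ_w(p) = {(i,i+1) : p_i = p}) such that for every KAT expression e, w ∈ L(e) if and only if (1,n) ∈ R⟦e⟧ under this interpretation. Consequently, if R⟦e⟧ = R⟦f⟧ under all interpretations then L(e) = L(f). -/
/-- A guarded string candidate: a list of atoms (sets of tests) and actions. -/
abbrev GList (A T : Type) := List (Set T ⊕ A)

/-- Guarded strings: nonempty alternating sequences starting and ending with an atom. -/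
inductive IsGuarded {A T : Type} : GList A T → Prop
  | single (α : Set T) : IsGuarded [Sum.inl α]
  | cons (α : Set T) (p : A) {l : GList A T} : IsGuarded l →
      IsGuarded (Sum.inl α :: Sum.inr p :: l)

/-- Guarded composition of guarded languages: fuse matching boundary atoms. -/
def gcomp {A T : Type} (L K : Set (GList A T)) : Set (GList A T) :=
  { z | ∃ (w : GList A T) (α : Set T) (x : GList A T),
      w ++ [Sum.inl α] ∈ L ∧ Sum.inl α :: x ∈ K ∧ z = w ++ Sum.inl α :: x }

/-- The language of all length-one guarded strings (all atoms). -/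
def atomsLang {A T : Type} : Set (GList A T) := { w | ∃ α : Set T, w = [Sum.inl α] }

/-- Iterated guarded composition. -/
def gpow {A T : Type} (L : Set (GList A T)) : ℕ → Set (GList A T)
  | 0 => atomsLang
  | n + 1 => gcomp L (gpow L n)

/-- Guarded star. -/
def gstar {A T : Type} (L : Set (GList A T)) : Set (GList A T) := ⋃ n, gpow L n

/-- Boolean (test) expressions over test variables T. -/
inductive BExp (T : Type) where
  | tru : BExp T
  | fls : BExp T
  | var (t : T) : BExp T
  | or (b c : BExp T) : BExp T
  | and (b c : BExp T) : BExp T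
  | not (b : BExp T) : BExp T

/-- Satisfaction of a test by an atom (truth assignment). -/
def BExp.holds {T : Type} (α : Set T) : BExp T → Prop
  | .tru => True
  | .fls => False
  | .var t => t ∈ α
  | .or b c => BExp.holds α b ∨ BExp.holds α c
  | .and b c => BExp.holds α b ∧ BExp.holds α c
  | .not b => ¬ BExp.holds α b

/-- The guarded language of a test. -/
def testLang {A T : Type} (b : BExp T) : Set (GList A T) :=
  { w | ∃ α : Set T, b.holds α ∧ w = [Sum.inl α] }

/-- KAT expressions over actions A and tests T. -/
inductive KExp (A T : Type) where
  | test (b : BExp T) : KExp A T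
  | act (p : A) : KExp A T
  | plus (e f : KExp A T) : KExp A T
  | seq (e f : KExp A T) : KExp A T
  | star (e : KExp A T) : KExp A T

/-- Language semantics of KAT. -/
def lang {A T : Type} : KExp A T → Set (GList A T)
  | .test b => testLang b
  | .act p => { w | ∃ α β : Set T, w = [Sum.inl α, Sum.inr p, Sum.inl β] }
  | .plus e f => lang e ∪ lang f
  | .seq e f => gcomp (lang e) (lang f)
  | .star e => gstar (lang e)

/-- Semantics of a test under a valuation τ on states S. -/
def bsem {T S : Type} (τ : T → Set S) : BExp T → Set S
  | .tru => Set.univ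
  | .fls => ∅
  | .var t => τ t
  | .or b c => bsem τ b ∪ bsem τ c
  | .and b c => bsem τ b ∩ bsem τ c
  | .not b => (bsem τ b)ᶜ

/-- Relational semantics of KAT under an interpretation (S, τ, σ). -/
def rsem {A T S : Type} (τ : T → Set S) (σ : A → S → S → Prop) : KExp A T → S → S → Prop
  | .test b => fun s s' => s = s' ∧ s ∈ bsem τ b
  | .act p => σ p
  | .plus e f => fun s s' => rsem τ σ e s s' ∨ rsem τ σ f s s'
  | .seq e f => fun s s' => ∃ s'', rsem τ σ e s s'' ∧ rsem τ σ f s'' s'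
  | .star e => Relation.ReflTransGen (rsem τ σ e)

/-- A relation is a partial function. -/
def Functional {S : Type} (r : S → S → Prop) : Prop :=
  ∀ s s₁ s₂, r s s₁ → r s s₂ → s₁ = s₂

/-- A KAT expression is deterministic: it maps functional interpretations to functional relations. -/
def DetExp {A T : Type} (e : KExp A T) : Prop :=
  ∀ (S : Type) (τ : T → Set S) (σ : A → S → S → Prop),
    (∀ p, Functional (σ p)) → Functional (rsem τ σ e)

/-- A guarded language is deterministic: no member is a proper prefix of another, and
any two distinct members first differ at an atom. -/
def DetLang {A T : Type} (L : Set (GList A T)) : Prop :=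
  ∀ w ∈ L, ∀ x ∈ L, w ≠ x →
    ∃ (l w' x' : GList A T) (α β : Set T), α ≠ β ∧
      w = l ++ Sum.inl α :: w' ∧ x = l ++ Sum.inl β :: x'

/-- The atom of a state: the set of tests true at it. -/
def atomOf {T S : Type} (τ : T → Set S) (s : S) : Set T := { t | s ∈ τ t }

/-- Labeled paths in an interpretation, together with their induced guarded strings. -/
inductive IsPath {A T S : Type} (τ : T → Set S) (σ : A → S → S → Prop) :
    S → GList A T → S → Prop
  | nil (s : S) : IsPath τ σ s [Sum.inl (atomOf τ s)] s
  | cons {s s' s'' : S} {p : A} {w : GList A T} :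
      σ p s s' → IsPath τ σ s' w s'' →
      IsPath τ σ s (Sum.inl (atomOf τ s) :: Sum.inr p :: w) s''

/-- GKAT expressions. -/
inductive GExp (A T : Type) where
  | assert (b : BExp T) : GExp A T
  | act (p : A) : GExp A T
  | seq (e f : GExp A T) : GExp A T
  | ite (b : BExp T) (e f : GExp A T) : GExp A T
  | whl (b : BExp T) (e : GExp A T) : GExp A T

/-- Language semantics of GKAT. -/
def glang {A T : Type} : GExp A T → Set (GList A T)
  | .assert b => testLang b
  | .act p => { w | ∃ α β : Set T, w = [Sum.inl α, Sum.inr p, Sum.inl β] }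
  | .seq e f => gcomp (glang e) (glang f)
  | .ite b e f => gcomp (testLang b) (glang e) ∪ gcomp (testLang b.not) (glang f)
  | .whl b e => gcomp (gstar (gcomp (testLang b) (glang e))) (testLang b.not)

/-- Output of a deterministic KAT automaton on a state and atom. -/
inductive Out (A Q : Type) where
  | accept : Out A Q
  | reject : Out A Q
  | step (p : A) (q : Q) : Out A Q

/-- Acceptance in a deterministic KAT automaton with transition function δ,
starting from dynamics γ. -/
inductive AccFrom {A T Q : Type} (δ : Q → Set T → Out A Q) :
    (Set T → Out A Q) → GList A T → Prop
  | accept {γ : Set T → Out A Q} {α : Set T} :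
      γ α = Out.accept → AccFrom δ γ [Sum.inl α]
  | step {γ : Set T → Out A Q} {α : Set T} {p : A} {q : Q} {w : GList A T} :
      γ α = Out.step p q → AccFrom δ (δ q) w →
      AccFrom δ γ (Sum.inl α :: Sum.inr p :: w)

/-- Brzozowski derivative of a language with respect to a word. -/
def dl {A T : Type} (L : Set (GList A T)) (u : GList A T) : Set (GList A T) :=
  { x | u ++ x ∈ L }

/-- An atom β over T₁ is 𝔱-consistent with an atom α over T₀. -/
def TConsistent {T₀ T₁ : Type} (𝔱 : T₀ → BExp T₁) (α : Set T₀) (β : Set T₁) : Prop :=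
  ∀ t, t ∈ α ↔ (𝔱 t).holds β

/-- Atom-replacement relation induced by a test substitution 𝔱. -/
inductive TRel {A T₀ T₁ : Type} (𝔱 : T₀ → BExp T₁) : GList A T₀ → GList A T₁ → Prop
  | nil : TRel 𝔱 [] []
  | atom {α : Set T₀} {β : Set T₁} {w : GList A T₀} {x : GList A T₁} :
      TConsistent 𝔱 α β → TRel 𝔱 w x → TRel 𝔱 (Sum.inl α :: w) (Sum.inl β :: x)
  | act {p : A} {w : GList A T₀} {x : GList A T₁} :
      TRel 𝔱 w x → TRel 𝔱 (Sum.inr p :: w) (Sum.inr p :: x)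

/-- apply_𝔱 on guarded languages. -/
def applyT {A T₀ T₁ : Type} (𝔱 : T₀ → BExp T₁) (L : Set (GList A T₀)) : Set (GList A T₁) :=
  { x | ∃ w ∈ L, TRel 𝔱 w x }

/-- Action-replacement relation induced by an action substitution 𝔰: each action is
replaced by a guarded string of 𝔰(p), fused with the surrounding atoms. -/
inductive SRel {A₀ A₁ T : Type} (𝔰 : A₀ → Set (GList A₁ T)) :
    GList A₀ T → GList A₁ T → Prop
  | single (α : Set T) : SRel 𝔰 [Sum.inl α] [Sum.inl α]
  | step {α β : Set T} {p : A₀} {u : GList A₁ T} {w : GList A₀ T} {x : GList A₁ T} :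
      Sum.inl α :: u ++ [Sum.inl β] ∈ 𝔰 p →
      SRel 𝔰 (Sum.inl β :: w) (Sum.inl β :: x) →
      SRel 𝔰 (Sum.inl α :: Sum.inr p :: Sum.inl β :: w) (Sum.inl α :: u ++ Sum.inl β :: x)

/-- apply^𝔰 on guarded languages. -/
def applyS {A₀ A₁ T : Type} (𝔰 : A₀ → Set (GList A₁ T)) (L : Set (GList A₀ T)) :
    Set (GList A₁ T) :=
  { x | ∃ w ∈ L, SRel 𝔰 w x }

/-- Builder for the guarded strings of the language L_k. -/
def buildLk {k : ℕ} : Fin k → Fin k → List (Fin k) → GList (Fin k) (Fin k)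
  | cur, act, [] => [Sum.inl {cur}, Sum.inr act, Sum.inl {cur}]
  | cur, act, j :: rest => Sum.inl {cur} :: Sum.inr act :: buildLk j cur rest

/-- The language L_k of Definition 6.2. -/
def Lk (k : ℕ) (hk : 0 < k) : Set (GList (Fin k) (Fin k)) :=
  { w | ∃ (i : Fin k) (rest : List (Fin k)),
      i ≠ ⟨0, hk⟩ ∧ List.Chain' (· ≠ ·) (i :: rest) ∧ w = buildLk i ⟨0, hk⟩ rest }

/-- k-density of a deterministic KAT automaton transition function. -/
def KDense {A T Q : Type} (δ : Q → Set T → Out A Q) (k : ℕ) : Prop :=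
  ∃ (S : Fin k → Set Q) (α : Fin k → Set T) (pa : Q → Fin k → A),
    Function.Injective α ∧
    (∀ i, (S i).Nonempty) ∧
    (∀ i q, q ∈ S i → δ q (α i) = Out.accept) ∧
    (∀ i j q, i ≠ j → q ∈ S i → ∃ q' ∈ S j, δ q (α j) = Out.step (pa q j) q') ∧
    (∀ i j m q q', q ∈ S i → q' ∈ S j → pa q m = pa q' m → i = j)

/-- The sequence of actions occurring in a guarded string. -/
def actsOf {A T : Type} (w : GList A T) : List A :=
  w.filterMap (fun x => match x with | .inl _ => none | .inr p => some p)

/-- The guarded language of a word over Σ: all guarded strings with that action sequence. -/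
def wordLang {A T : Type} (ps : List A) : Set (GList A T) :=
  { w | IsGuarded w ∧ actsOf w = ps }

/-- Test expressions without test variables. -/
def BExp.varFree {T : Type} : BExp T → Prop
  | .tru => True
  | .fls => True
  | .var _ => False
  | .or b c => BExp.varFree b ∧ BExp.varFree c
  | .and b c => BExp.varFree b ∧ BExp.varFree c
  | .not b => BExp.varFree b

/-- KA expressions: KAT expressions with no test variables. -/
def KExp.testFree {A T : Type} : KExp A T → Prop
  | .test b => b.varFree
  | .act _ => True
  | .plus e f => KExp.testFree e ∧ KExp.testFree f
  | .seq e f => KExp.testFree e ∧ KExp.testFree f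
  | .star e => KExp.testFree e

/-! Under any interpretation, `R⟦e⟧` relates `s` to `s'` exactly when some guarded string of
`L(e)` labels a path from `s` to `s'`. In the interpretation induced by a guarded string `w`
the states form a line, and the only path from its first state to its last one is labelled
by `w` itself. -/

section Paths

variable {A T S : Type} {τ : T → Set S} {σ : A → S → S → Prop}

theorem bsem_iff_holds_atomOf (b : BExp T) (s : S) : s ∈ bsem τ b ↔ b.holds (atomOf τ s) := by
  induction b with
  | tru | fls | var => simp [bsem, BExp.holds, atomOf]
  | or b c ihb ihc | and b c ihb ihc => simp [bsem, BExp.holds, ihb, ihc]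
  | not b ihb => simp [bsem, BExp.holds, ihb]

theorem isPath_singleton_iff {s s' : S} {α : Set T} :
    IsPath τ σ s ([Sum.inl α] : GList A T) s' ↔ s = s' ∧ α = atomOf τ s := by
  constructor
  · rintro ⟨⟩
    exact ⟨rfl, rfl⟩
  · rintro ⟨rfl, rfl⟩
    exact .nil s

theorem isPath_act_iff {s s' : S} {α β : Set T} {p : A} :
    IsPath τ σ s [Sum.inl α, Sum.inr p, Sum.inl β] s' ↔
      σ p s s' ∧ α = atomOf τ s ∧ β = atomOf τ s' := by
  constructor
  · rintro (_ | ⟨hσ, ⟨⟩⟩)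
    exact ⟨hσ, rfl, rfl⟩
  · rintro ⟨hσ, rfl, rfl⟩
    exact .cons hσ (.nil s')

theorem IsPath.exists_eq_append_atomOf {s s' : S} {w : GList A T} (h : IsPath τ σ s w s') :
    ∃ u, w = u ++ [Sum.inl (atomOf τ s')] := by
  induction h with
  | nil s => exact ⟨[], rfl⟩
  | @cons s _ _ p _ _ _ ih =>
    obtain ⟨u, rfl⟩ := ih
    exact ⟨Sum.inl (atomOf τ s) :: Sum.inr p :: u, rfl⟩

theorem IsPath.exists_eq_atomOf_cons {s s' : S} {w : GList A T} (h : IsPath τ σ s w s') :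
    ∃ x, w = Sum.inl (atomOf τ s) :: x := by
  cases h <;> exact ⟨_, rfl⟩

theorem IsPath.append_cons {s t s' : S} {w x : GList A T} {α : Set T}
    (h₁ : IsPath τ σ s (w ++ [Sum.inl α]) t) (h₂ : IsPath τ σ t (Sum.inl α :: x) s') :
    IsPath τ σ s (w ++ Sum.inl α :: x) s' := by
  generalize hl : w ++ [Sum.inl α] = l at h₁
  induction h₁ generalizing w with
  | nil =>
    obtain ⟨rfl, -⟩ := List.append_eq_singleton_iff.1 hl |>.resolve_right (by simp)
    exact h₂
  | cons hσ _ ih =>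
    rcases w with _ | ⟨c, _ | ⟨d, w⟩⟩ <;> simp only [List.nil_append, List.cons_append,
      List.cons.injEq, reduceCtorEq, false_and, and_false] at hl
    obtain ⟨rfl, rfl, hw⟩ := hl
    exact .cons hσ (ih h₂ hw)

theorem IsPath.exists_split {s s' : S} {w x : GList A T} {α : Set T}
    (h : IsPath τ σ s (w ++ Sum.inl α :: x) s') :
    ∃ t, IsPath τ σ s (w ++ [Sum.inl α]) t ∧ IsPath τ σ t (Sum.inl α :: x) s' := by
  generalize hl : w ++ Sum.inl α :: x = l at h
  induction h generalizing w with
  | nil s =>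
    rcases w with _ | ⟨c, w⟩ <;> simp at hl
    obtain ⟨rfl, rfl⟩ := hl
    exact ⟨s, .nil s, .nil s⟩
  | cons hσ hpath ih =>
    rcases w with _ | ⟨c, _ | ⟨d, w⟩⟩ <;> simp only [List.nil_append, List.cons_append,
      List.cons.injEq, reduceCtorEq, false_and, and_false,
      Sum.inl.injEq] at hl
    · obtain ⟨rfl, rfl⟩ := hl
      exact ⟨_, .nil _, .cons hσ hpath⟩
    · obtain ⟨rfl, rfl, hw⟩ := hl
      obtain ⟨t, h₁, h₂⟩ := ih hw
      exact ⟨t, .cons hσ h₁, h₂⟩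

variable (τ σ) in
def pathRel (L : Set (GList A T)) (s s' : S) : Prop :=
  ∃ w ∈ L, IsPath τ σ s w s'

theorem pathRel_gcomp {L K : Set (GList A T)} {s s' : S} :
    pathRel τ σ (gcomp L K) s s' ↔ ∃ t, pathRel τ σ L s t ∧ pathRel τ σ K t s' := by
  constructor
  · rintro ⟨_, ⟨w, α, x, hw, hx, rfl⟩, h⟩
    obtain ⟨t, h₁, h₂⟩ := h.exists_split
    exact ⟨t, ⟨_, hw, h₁⟩, _, hx, h₂⟩
  · rintro ⟨t, ⟨u, hu, h₁⟩, v, hv, h₂⟩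
    obtain ⟨w, rfl⟩ := h₁.exists_eq_append_atomOf
    obtain ⟨x, rfl⟩ := h₂.exists_eq_atomOf_cons
    exact ⟨_, ⟨w, _, x, hu, hv, rfl⟩, h₁.append_cons h₂⟩

theorem pathRel_atomsLang {s s' : S} : pathRel τ σ (atomsLang : Set (GList A T)) s s' ↔ s = s' := by
  constructor
  · rintro ⟨_, ⟨α, rfl⟩, h⟩
    exact (isPath_singleton_iff.1 h).1
  · rintro rfl
    exact ⟨_, ⟨_, rfl⟩, .nil s⟩

theorem pathRel_gstar {L : Set (GList A T)} {s s' : S} :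
    pathRel τ σ (gstar L) s s' ↔ Relation.ReflTransGen (pathRel τ σ L) s s' := by
  have pathRel_gpow : ∀ n s, pathRel τ σ (gpow L n) s s' →
      Relation.ReflTransGen (pathRel τ σ L) s s' := by
    intro n
    induction n with
    | zero => rintro s h; rw [pathRel_atomsLang.1 h]
    | succ n ih =>
      rintro s h
      obtain ⟨t, hst, ht⟩ := pathRel_gcomp.1 h
      exact .head hst (ih t ht)
  constructor
  · rintro ⟨w, hw, h⟩
    obtain ⟨n, hn⟩ := Set.mem_iUnion.1 hw
    exact pathRel_gpow n s ⟨w, hn, h⟩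
  · intro h
    suffices ∃ n, pathRel τ σ (gpow L n) s s' by
      obtain ⟨n, w, hw, hp⟩ := this
      exact ⟨w, Set.mem_iUnion.2 ⟨n, hw⟩, hp⟩
    induction h using Relation.ReflTransGen.head_induction_on with
    | refl => exact ⟨0, pathRel_atomsLang.2 rfl⟩
    | head hst _ ih =>
      obtain ⟨n, hn⟩ := ih
      exact ⟨n + 1, pathRel_gcomp.2 ⟨_, hst, hn⟩⟩

theorem rsem_eq_pathRel_lang (e : KExp A T) : rsem τ σ e = pathRel τ σ (lang e) := by
  induction e with
  | test b =>
    ext s s'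
    simp only [rsem, lang, pathRel, testLang, bsem_iff_holds_atomOf]
    constructor
    · rintro ⟨rfl, hb⟩
      exact ⟨_, ⟨_, hb, rfl⟩, .nil s⟩
    · rintro ⟨_, ⟨α, hb, rfl⟩, h⟩
      obtain ⟨rfl, rfl⟩ := isPath_singleton_iff.1 h
      exact ⟨rfl, hb⟩
  | act p =>
    ext s s'
    constructor
    · intro hσ
      exact ⟨_, ⟨_, _, rfl⟩, isPath_act_iff.2 ⟨hσ, rfl, rfl⟩⟩
    · rintro ⟨_, ⟨α, β, rfl⟩, h⟩
      exact (isPath_act_iff.1 h).1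
  | plus e f ihe ihf =>
    ext s s'
    simp only [rsem, ihe, ihf, lang, pathRel, Set.mem_union, or_and_right, exists_or]
  | seq e f ihe ihf =>
    ext s s'
    simp only [rsem, ihe, ihf, lang, pathRel_gcomp]
  | star e ih =>
    ext s s'
    simp only [rsem, ih, lang, pathRel_gstar]

end Paths

section Guarded

variable {A T : Type}

/-- The guarded string `α₀ p₁ α₁ ⋯ pₙ αₙ` with `rest = [(p₁, α₁), …, (pₙ, αₙ)]`. -/
def guardedString (α₀ : Set T) (rest : List (A × Set T)) : GList A T :=
  Sum.inl α₀ :: rest.flatMap fun pa => [Sum.inr pa.1, Sum.inl pa.2]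

theorem IsGuarded.exists_eq_guardedString {w : GList A T} (h : IsGuarded w) :
    ∃ α₀ rest, w = guardedString α₀ rest := by
  induction h with
  | single α => exact ⟨α, [], rfl⟩
  | cons α p _ ih =>
    obtain ⟨α₁, rest, rfl⟩ := ih
    exact ⟨α, (p, α₁) :: rest, rfl⟩

theorem IsGuarded.append_cons {w x : GList A T} {α : Set T}
    (hw : IsGuarded (w ++ [Sum.inl α])) (hx : IsGuarded (Sum.inl α :: x)) :
    IsGuarded (w ++ Sum.inl α :: x) := by
  generalize hl : w ++ [Sum.inl α] = l at hw
  induction hw generalizing w with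
  | single =>
    obtain ⟨rfl, -⟩ := List.append_eq_singleton_iff.1 hl |>.resolve_right (by simp)
    exact hx
  | cons β p _ ih =>
    rcases w with _ | ⟨c, _ | ⟨d, w⟩⟩ <;> simp only [List.nil_append, List.cons_append,
      List.cons.injEq, reduceCtorEq, false_and, and_false] at hl
    obtain ⟨rfl, rfl, hw⟩ := hl
    exact .cons β p (ih hw)

theorem isGuarded_of_mem_gcomp {L K : Set (GList A T)} (hL : ∀ w ∈ L, IsGuarded w)
    (hK : ∀ w ∈ K, IsGuarded w) {w : GList A T} (hw : w ∈ gcomp L K) : IsGuarded w := by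
  obtain ⟨u, α, x, hu, hx, rfl⟩ := hw
  exact (hL _ hu).append_cons (hK _ hx)

theorem isGuarded_of_mem_gstar {L : Set (GList A T)} (hL : ∀ w ∈ L, IsGuarded w)
    {w : GList A T} (hw : w ∈ gstar L) : IsGuarded w := by
  obtain ⟨n, hn⟩ := Set.mem_iUnion.1 hw
  clear hw
  induction n generalizing w with
  | zero =>
    obtain ⟨α, rfl⟩ := hn
    exact .single α
  | succ n ih => exact isGuarded_of_mem_gcomp hL (fun _ => ih) hn

theorem isGuarded_of_mem_lang {e : KExp A T} {w : GList A T} (hw : w ∈ lang e) :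
    IsGuarded w := by
  induction e generalizing w with
  | test b =>
    obtain ⟨α, -, rfl⟩ := hw
    exact .single α
  | act p =>
    obtain ⟨α, β, rfl⟩ := hw
    exact .cons α p (.single β)
  | plus e f ihe ihf => exact hw.elim ihe ihf
  | seq e f ihe ihf => exact isGuarded_of_mem_gcomp (fun _ => ihe) (fun _ => ihf) hw
  | star e ih => exact isGuarded_of_mem_gstar (fun _ => ih) hw

end Guarded

section Line

variable {A T : Type} (α₀ : Set T) (rest : List (A × Set T))

/-- State `i` carries the `i`-th atom of `guardedString α₀ rest`. -/
def lineTau (t : T) : Set (Fin (rest.length + 1)) :=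
  { i | t ∈ (α₀ :: rest.map Prod.snd).get (Fin.cast (by simp) i) }

/-- The only transitions are `i → i + 1`, labelled by the `(i + 1)`-st action. -/
def lineSigma (p : A) (i j : Fin (rest.length + 1)) : Prop :=
  (j : ℕ) = (i : ℕ) + 1 ∧ (rest[(i : ℕ)]?).map Prod.fst = some p

theorem atomOf_lineTau_succ (i : Fin rest.length) :
    atomOf (lineTau α₀ rest) i.succ = rest[i].2 := by
  ext t
  simp [atomOf, lineTau]

theorem isPath_line_from (i : Fin (rest.length + 1)) :
    IsPath (lineTau α₀ rest) (lineSigma rest) i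
      (Sum.inl (atomOf (lineTau α₀ rest) i) ::
        (rest.drop i).flatMap fun pa => [Sum.inr pa.1, Sum.inl pa.2])
      (Fin.last _) := by
  induction i using Fin.reverseInduction with
  | last => simpa using IsPath.nil (Fin.last rest.length)
  | cast i ih =>
    have hσ : lineSigma rest rest[i].1 i.castSucc i.succ := by simp [lineSigma]
    rw [Fin.val_castSucc, List.drop_eq_getElem_cons i.isLt, List.flatMap_cons]
    rw [atomOf_lineTau_succ] at ih
    exact .cons hσ ih

theorem IsPath.eq_line_from {i j : Fin (rest.length + 1)} {w : GList A T}
    (h : IsPath (lineTau α₀ rest) (lineSigma rest) i w j) (hj : j = Fin.last _) :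
    w = Sum.inl (atomOf (lineTau α₀ rest) i) ::
      (rest.drop i).flatMap fun pa => [Sum.inr pa.1, Sum.inl pa.2] := by
  induction h with
  | nil => simp [hj]
  | @cons i i' _ p _ hσ _ ih =>
    obtain ⟨hi', hp⟩ := hσ
    obtain ⟨pa, hpa, rfl⟩ := Option.map_eq_some_iff.1 hp
    obtain ⟨hi, rfl⟩ := List.getElem?_eq_some_iff.1 hpa
    have hsucc : i' = (⟨i, hi⟩ : Fin rest.length).succ := Fin.ext hi'
    rw [ih hj, hsucc, atomOf_lineTau_succ, List.drop_eq_getElem_cons hi]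
    rfl

theorem isPath_line_iff {w : GList A T} :
    IsPath (lineTau α₀ rest) (lineSigma rest) 0 w (Fin.last _) ↔ w = guardedString α₀ rest := by
  constructor
  · intro h
    exact h.eq_line_from α₀ rest rfl
  · rintro rfl
    exact isPath_line_from α₀ rest 0

theorem mem_lang_iff_rsem_line (e : KExp A T) :
    guardedString α₀ rest ∈ lang e ↔ rsem (lineTau α₀ rest) (lineSigma rest) e 0 (Fin.last _) := by
  rw [rsem_eq_pathRel_lang]
  constructor
  · intro h
    exact ⟨_, h, (isPath_line_iff α₀ rest).2 rfl⟩
  · rintro ⟨w, hw, h⟩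
    rwa [← (isPath_line_iff α₀ rest).1 h]

end Line

theorem lang_subset_of_forall_rsem_le {A T : Type} {e f : KExp A T}
    (h : ∀ (S : Type) (τ : T → Set S) (σ : A → S → S → Prop), rsem τ σ e ≤ rsem τ σ f) :
    lang e ⊆ lang f := by
  intro w hw
  obtain ⟨α₀, rest, rfl⟩ := (isGuarded_of_mem_lang hw).exists_eq_guardedString
  rw [mem_lang_iff_rsem_line] at hw ⊢
  exact h _ _ _ _ _ hw

/-- every guarded string α₀ p₁ α₁ ... α_n (encoded by its first atom α₀ and
the list `rest` of subsequent action/atom pairs) induces an interpretation on the states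
{0,...,n} under which membership of the string in L(e) coincides with the pair (0,n)
being in R⟦e⟧; consequently, relational equivalence under all interpretations implies
language equivalence. -/
theorem guarded_string_interpretation {A T : Type} :
    (∀ (α₀ : Set T) (rest : List (A × Set T)) (e : KExp A T),
      (Sum.inl α₀ :: rest.flatMap (fun pa => [Sum.inr pa.1, Sum.inl pa.2])) ∈ lang e ↔
        rsem (S := Fin (rest.length + 1))
          (fun t => { i : Fin (rest.length + 1) |
              t ∈ (α₀ :: rest.map Prod.snd).get (Fin.cast (by simp) i) })
          (fun p i j => (j : ℕ) = (i : ℕ) + 1 ∧ (rest[(i : ℕ)]?).map Prod.fst = some p)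
          e ⟨0, Nat.succ_pos _⟩ ⟨rest.length, Nat.lt_succ_self _⟩) ∧
    (∀ e f : KExp A T,
      (∀ (S : Type) (τ : T → Set S) (σ : A → S → S → Prop), rsem τ σ e = rsem τ σ f) →
      lang e = lang f) :=
  ⟨fun α₀ rest e => mem_lang_iff_rsem_line α₀ rest e,
    fun _ _ h => (lang_subset_of_forall_rsem_le fun S τ σ => (h S τ σ).le).antisymm
      (lang_subset_of_forall_rsem_le fun S τ σ => (h S τ σ).ge)⟩
end

section
/- If L is a deterministic guarded language over (Σ₀, T₀), and (𝔰, 𝔱) is a guarded language morphism with 𝔰(p) deterministic for every p ∈ Σ₀, then apply^𝔰_𝔱(L) is a deterministic guarded language. -/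
/-! Call two strings coherent if they are equal or first differ at an atom, so that a language is
deterministic iff its members are pairwise coherent. Both substitutions act position by position
and preserve coherence of the pairs they relate: a 𝔱-consistent atom determines the atom it
replaces, and two images of one action `p` are coherent because `𝔰 p` is deterministic. If those
images are equal, coherence passes on to the rest of the strings; if not, they already differ at
an atom. -/

open Sum

section Coherent

variable {A T : Type}

def Coherent (w x : GList A T) : Prop :=
  w = x ∨ ∃ (l w' x' : GList A T) (α β : Set T), α ≠ β ∧
    w = l ++ inl α :: w' ∧ x = l ++ inl β :: x'

theorem DetLang.coherent {L : Set (GList A T)} (hL : DetLang L) {w x : GList A T}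
    (hw : w ∈ L) (hx : x ∈ L) : Coherent w x :=
  (eq_or_ne w x).imp_right (hL w hw x hx)

theorem detLang_of_coherent {L : Set (GList A T)}
    (h : ∀ w ∈ L, ∀ x ∈ L, Coherent w x) : DetLang L :=
  fun w hw x hx hne => (h w hw x hx).resolve_left hne

theorem coherent_cons_cons {a b : Set T ⊕ A} {w x : GList A T} :
    Coherent (a :: w) (b :: x) ↔
      (∃ α β, α ≠ β ∧ a = inl α ∧ b = inl β) ∨ (a = b ∧ Coherent w x) := by
  constructor
  · rintro (h | ⟨_ | ⟨c, l⟩, w', x', α, β, hαβ, hw, hx⟩)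
    · exact .inr ⟨(List.cons.inj h).1, .inl (List.cons.inj h).2⟩
    · simp only [List.nil_append, List.cons.injEq] at hw hx
      exact .inl ⟨α, β, hαβ, hw.1, hx.1⟩
    · simp only [List.cons_append, List.cons.injEq] at hw hx
      exact .inr ⟨hw.1.trans hx.1.symm, .inr ⟨l, w', x', α, β, hαβ, hw.2, hx.2⟩⟩
  · rintro (⟨α, β, hαβ, rfl, rfl⟩ | ⟨rfl, rfl | ⟨l, w', x', α, β, hαβ, rfl, rfl⟩⟩)
    · exact .inr ⟨[], w, x, α, β, hαβ, rfl, rfl⟩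
    · exact .inl rfl
    · exact .inr ⟨a :: l, w', x', α, β, hαβ, rfl, rfl⟩

theorem coherent_inl_cons_inl_cons {α β : Set T} {w x : GList A T} :
    Coherent (inl α :: w) (inl β :: x) ↔ (α = β → Coherent w x) := by
  by_cases hαβ : α = β <;> simp [coherent_cons_cons, hαβ]

theorem coherent_inr_cons_inr_cons {p q : A} {w x : GList A T} :
    Coherent (inr p :: w) (inr q :: x) ↔ p = q ∧ Coherent w x := by
  simp [coherent_cons_cons]

theorem not_coherent_inl_cons_inr_cons {α : Set T} {p : A} {w x : GList A T} :
    ¬ Coherent (inl α :: w) (inr p :: x) := by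
  simp [coherent_cons_cons]

theorem not_coherent_inr_cons_inl_cons {α : Set T} {p : A} {w x : GList A T} :
    ¬ Coherent (inr p :: w) (inl α :: x) := by
  simp [coherent_cons_cons]

theorem not_coherent_nil_cons {a : Set T ⊕ A} {x : GList A T} : ¬ Coherent [] (a :: x) := by
  rintro (h | ⟨l, w', x', α, β, -, hw, -⟩)
  · exact List.cons_ne_nil _ _ h.symm
  · simp at hw

theorem not_coherent_cons_nil {a : Set T ⊕ A} {w : GList A T} : ¬ Coherent (a :: w) [] := by
  rintro (h | ⟨l, w', x', α, β, -, -, hx⟩)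
  · exact List.cons_ne_nil _ _ h
  · simp at hx

theorem Coherent.append_left (c : GList A T) {w x : GList A T} (h : Coherent w x) :
    Coherent (c ++ w) (c ++ x) := by
  rcases h with rfl | ⟨l, w', x', α, β, hαβ, rfl, rfl⟩
  · exact .inl rfl
  · exact .inr ⟨c ++ l, w', x', α, β, hαβ, by simp, by simp⟩

theorem Coherent.append_of_ne {w x : GList A T} (h : Coherent w x) (hne : w ≠ x)
    (r r' : GList A T) : Coherent (w ++ r) (x ++ r') := by
  obtain ⟨l, w', x', α, β, hαβ, rfl, rfl⟩ := h.resolve_left hne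
  exact .inr ⟨l, w' ++ r, x' ++ r', α, β, hαβ, by simp, by simp⟩

end Coherent

theorem TConsistent.unique_left {T₀ T₁ : Type} {𝔱 : T₀ → BExp T₁} {α α' : Set T₀}
    {β : Set T₁} (h : TConsistent 𝔱 α β) (h' : TConsistent 𝔱 α' β) : α = α' :=
  Set.ext fun t => (h t).trans (h' t).symm

theorem TRel.coherent {A T₀ T₁ : Type} {𝔱 : T₀ → BExp T₁} {w₁ w₂ : GList A T₀}
    {x₁ x₂ : GList A T₁} (h₁ : TRel 𝔱 w₁ x₁) (h₂ : TRel 𝔱 w₂ x₂) (hw : Coherent w₁ w₂) :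
    Coherent x₁ x₂ := by
  induction h₁ generalizing w₂ x₂ with
  | nil =>
    cases h₂ with
    | nil => exact .inl rfl
    | atom | act => exact absurd hw not_coherent_nil_cons
  | atom hαβ _ ih =>
    cases h₂ with
    | nil => exact absurd hw not_coherent_cons_nil
    | atom hαβ' h₂ =>
      rw [coherent_inl_cons_inl_cons] at hw ⊢
      rintro rfl
      exact ih h₂ (hw (hαβ.unique_left hαβ'))
    | act => exact absurd hw not_coherent_inl_cons_inr_cons
  | act _ ih =>
    cases h₂ with
    | nil => exact absurd hw not_coherent_cons_nil
    | atom => exact absurd hw not_coherent_inr_cons_inl_cons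
    | act h₂ =>
      rw [coherent_inr_cons_inr_cons] at hw ⊢
      exact ⟨hw.1, ih h₂ hw.2⟩

theorem SRel.coherent {A₀ A₁ T : Type} {𝔰 : A₀ → Set (GList A₁ T)}
    (h𝔰 : ∀ p, DetLang (𝔰 p)) {v₁ v₂ : GList A₀ T} {y₁ y₂ : GList A₁ T}
    (h₁ : SRel 𝔰 v₁ y₁) (h₂ : SRel 𝔰 v₂ y₂) (hv : Coherent v₁ v₂) : Coherent y₁ y₂ := by
  induction h₁ generalizing v₂ y₂ with
  | single α =>
    cases h₂ with
    | single => exact coherent_inl_cons_inl_cons.mpr fun _ => .inl rfl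
    | step =>
      simp only [List.cons_append, coherent_inl_cons_inl_cons] at hv ⊢
      exact fun hαα' => absurd (hv hαα') not_coherent_nil_cons
  | @step α β p u w x hu _ ih =>
    cases h₂ with
    | single =>
      simp only [List.cons_append, coherent_inl_cons_inl_cons] at hv ⊢
      exact fun hαα' => absurd (hv hαα') not_coherent_cons_nil
    | @step _ β' p' u' _ x' hu' h₂ =>
      simp only [List.cons_append, coherent_inl_cons_inl_cons] at hv hu hu' ⊢
      rintro rfl
      obtain ⟨rfl, hw⟩ := coherent_inr_cons_inr_cons.mp (hv rfl)
      have hs : Coherent (u ++ [inl β]) (u' ++ [inl β']) :=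
        coherent_inl_cons_inl_cons.mp ((h𝔰 p).coherent hu hu') rfl
      by_cases hs_eq : u ++ [inl β] = u' ++ [inl β']
      · obtain ⟨rfl, hββ'⟩ := List.append_inj' hs_eq rfl
        obtain rfl : β = β' := by simpa using hββ'
        exact (ih h₂ hw).append_left u
      · simpa using hs.append_of_ne hs_eq x x'

theorem DetLang.applyT {A T₀ T₁ : Type} {L : Set (GList A T₀)} (hL : DetLang L)
    (𝔱 : T₀ → BExp T₁) : DetLang (applyT 𝔱 L) :=
  detLang_of_coherent fun _ ⟨_, hw, h⟩ _ ⟨_, hw', h'⟩ => h.coherent h' (hL.coherent hw hw')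

theorem DetLang.applyS {A₀ A₁ T : Type} {L : Set (GList A₀ T)} (hL : DetLang L)
    {𝔰 : A₀ → Set (GList A₁ T)} (h𝔰 : ∀ p, DetLang (𝔰 p)) : DetLang (applyS 𝔰 L) :=
  detLang_of_coherent fun _ ⟨_, hv, h⟩ _ ⟨_, hv', h'⟩ =>
    h.coherent h𝔰 h' (hL.coherent hv hv')

theorem apply_preserves_det_general {A₀ A₁ T₀ T₁ : Type} (L : Set (GList A₀ T₀))
    (𝔰 : A₀ → Set (GList A₁ T₁)) (𝔱 : T₀ → BExp T₁)
    (hL : DetLang L) (h𝔰 : ∀ p, DetLang (𝔰 p)) :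
    DetLang (applyS 𝔰 (applyT 𝔱 L)) :=
  (hL.applyT 𝔱).applyS h𝔰

/-- applying a guarded language morphism with deterministic action images
to a deterministic guarded language yields a deterministic guarded language. -/
theorem apply_preserves_det {A₀ A₁ T₀ T₁ : Type} (L : Set (GList A₀ T₀))
    (𝔰 : A₀ → Set (GList A₁ T₁)) (𝔱 : T₀ → BExp T₁)
    (hLg : ∀ w ∈ L, IsGuarded w) (h𝔰g : ∀ p, ∀ w ∈ 𝔰 p, IsGuarded w)
    (hL : DetLang L) (h𝔰 : ∀ p, DetLang (𝔰 p)) :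
    DetLang (applyS 𝔰 (applyT 𝔱 L)) :=
  apply_preserves_det_general L 𝔰 𝔱 hL h𝔰
end
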